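/- arXiv:1501.05342 — 2 statements merged into one kernel-verified Lean document; each statement's English description precedes it below -/
import Mathlib

section
/- The function (u,v) ↦ 1/√(u² + v⁴) is integrable over the square [-1,1]² with respect to Lebesgue measure. -/
open MeasureTheory Set

private lemma abs_rpow_integrable :
    IntegrableOn (fun x : ℝ => |x| ^ (-(2:ℝ)/3)) (Set.Icc (-1:ℝ) 1) volume := by
  rw [integrableOn_Icc_iff_integrableOn_Ioc,
    ← intervalIntegrable_iff_integrableOn_Ioc_of_le (by norm_num : (-1:ℝ) ≤ 1)]
  have h01 : IntervalIntegrable (fun x : ℝ => |x| ^ (-(2:ℝ)/3)) volume 0 1 := by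
    have := intervalIntegral.intervalIntegrable_rpow' (a := 0) (b := 1) (r := -(2:ℝ)/3)
      (by norm_num)
    rw [intervalIntegrable_iff_integrableOn_Ioc_of_le (by norm_num : (0:ℝ) ≤ 1)] at this ⊢
    refine this.congr_fun (fun x hx => ?_) measurableSet_Ioc
    rw [abs_of_pos hx.1]
  have hneg : IntervalIntegrable (fun x : ℝ => |x| ^ (-(2:ℝ)/3)) volume (-1) 0 := by
    have := (IntervalIntegrable.iff_comp_neg).mp h01
    have h2 : IntervalIntegrable (fun x : ℝ => |x| ^ (-(2:ℝ)/3)) volume 0 (-1) := by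
      simpa using this
    exact h2.symm
  exact hneg.trans h01

private lemma sqrt_lower (u v : ℝ) :
    |u| ^ ((2:ℝ)/3) * |v| ^ ((2:ℝ)/3) ≤ Real.sqrt (u ^ 2 + v ^ 4) := by
  have h1 : |u| ^ ((4:ℝ)/3) * |v| ^ ((4:ℝ)/3) ≤ u ^ 2 + v ^ 4 := by
    have key := Real.geom_mean_le_arith_mean2_weighted (w₁ := 2/3) (w₂ := 1/3)
      (p₁ := u ^ 2) (p₂ := v ^ 4) (by norm_num) (by norm_num) (sq_nonneg u)
      (by positivity) (by norm_num)
    have e1 : (u ^ 2 : ℝ) ^ ((2:ℝ)/3) = |u| ^ ((4:ℝ)/3) := by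
      rw [← sq_abs, ← Real.rpow_natCast |u| 2, ← Real.rpow_mul (abs_nonneg u)]
      norm_num
    have e2 : (v ^ 4 : ℝ) ^ ((1:ℝ)/3) = |v| ^ ((4:ℝ)/3) := by
      have hv4 : (v ^ 4 : ℝ) = |v| ^ 4 := by
        rw [← abs_pow, abs_of_nonneg (by positivity)]
      rw [hv4, ← Real.rpow_natCast |v| 4, ← Real.rpow_mul (abs_nonneg v)]
      norm_num
    rw [e1, e2] at key
    nlinarith [sq_nonneg u, sq_nonneg (v ^ 2)]
  calc |u| ^ ((2:ℝ)/3) * |v| ^ ((2:ℝ)/3)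
      = Real.sqrt (|u| ^ ((4:ℝ)/3) * |v| ^ ((4:ℝ)/3)) := by
        rw [Real.sqrt_mul (by positivity), Real.sqrt_eq_rpow, Real.sqrt_eq_rpow,
          ← Real.rpow_mul (abs_nonneg u), ← Real.rpow_mul (abs_nonneg v)]
        norm_num
    _ ≤ Real.sqrt (u ^ 2 + v ^ 4) := Real.sqrt_le_sqrt h1

theorem stmt10 :
    IntegrableOn (fun x : ℝ × ℝ => 1 / Real.sqrt (x.1 ^ 2 + x.2 ^ 4))
      (Set.Icc (-1 : ℝ) 1 ×ˢ Set.Icc (-1 : ℝ) 1) volume := by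
  have hg : Integrable (fun z : ℝ × ℝ => |z.1| ^ (-(2:ℝ)/3) * |z.2| ^ (-(2:ℝ)/3))
      ((volume.restrict (Icc (-1:ℝ) 1)).prod (volume.restrict (Icc (-1:ℝ) 1))) :=
    abs_rpow_integrable.mul_prod abs_rpow_integrable
  rw [Measure.prod_restrict] at hg
  rw [IntegrableOn, Measure.volume_eq_prod]
  refine Integrable.mono' hg ?_ ?_
  · refine (Measurable.aestronglyMeasurable ?_).restrict
    fun_prop
  · have hz : (volume.prod volume) {x : ℝ × ℝ | x.1 = 0 ∨ x.2 = 0} = 0 := by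
      have hset : {x : ℝ × ℝ | x.1 = 0 ∨ x.2 = 0}
          = (({0} : Set ℝ) ×ˢ (univ : Set ℝ)) ∪ ((univ : Set ℝ) ×ˢ ({0} : Set ℝ)) := by
        ext ⟨a, b⟩; simp [eq_comm]
      rw [hset]
      refine measure_union_null ?_ ?_ <;> rw [Measure.prod_prod] <;> simp
    have hae : ∀ᵐ x : ℝ × ℝ ∂((volume.prod volume).restrict
        (Icc (-1:ℝ) 1 ×ˢ Icc (-1:ℝ) 1)), x.1 ≠ 0 ∧ x.2 ≠ 0 := by
      refine ae_restrict_of_ae ?_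
      rw [ae_iff]
      refine measure_mono_null (fun x hx => ?_) hz
      simp only [mem_setOf_eq] at hx ⊢
      by_contra hc
      push_neg at hc
      exact hx ⟨hc.1, hc.2⟩
    filter_upwards [hae] with x hx
    obtain ⟨hu, hv⟩ := hx
    have h1 : (0:ℝ) < |x.1| ^ ((2:ℝ)/3) * |x.2| ^ ((2:ℝ)/3) := by positivity
    have h2 := sqrt_lower x.1 x.2
    have h3 : 1 / Real.sqrt (x.1 ^ 2 + x.2 ^ 4)
        ≤ 1 / (|x.1| ^ ((2:ℝ)/3) * |x.2| ^ ((2:ℝ)/3)) :=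
      one_div_le_one_div_of_le h1 h2
    have h4 : ‖1 / Real.sqrt (x.1 ^ 2 + x.2 ^ 4)‖ = 1 / Real.sqrt (x.1 ^ 2 + x.2 ^ 4) := by
      rw [Real.norm_eq_abs, abs_of_nonneg (by positivity)]
    rw [h4]
    refine h3.trans_eq ?_
    rw [one_div, mul_inv, ← Real.rpow_neg (abs_nonneg x.1), ← Real.rpow_neg (abs_nonneg x.2)]
    norm_num
end

section
/- Suppose for every i in a finite index set, aᵢ : P → ℝ are functions bounded by a constant C, and ψᵢ(x) = Σ_{α : w(α) = wᵢ} aᵢ,α · x_{α₁}⋯x_{α_s} are weighted-homogeneous polynomials of degree wᵢ on ℝⁿ (weights w₁ ≤ … ≤ wₙ ≤ w̄, multi-indices α with w(α) := w_{α₁} + … + w_{α_s}). Then there exists a constant C' depending only on n, w̄ and C such that ‖ψ(x)‖ ≤ C'‖x‖ for all x ∈ ℝⁿ, where ‖x‖ = maxᵢ |xᵢ|^{1/wᵢ} and ψ = (ψ₁,…,ψₙ). -/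
open MeasureTheory Set

theorem stmt18 (n : ℕ) (hn : 0 < n) (wbar : ℕ) (w : Fin n → ℕ)
    (hw : ∀ i, 0 < w i) (hwle : ∀ i, w i ≤ wbar) (C : ℝ) (hC : 0 < C) :
    ∃ C' : ℝ, 0 < C' ∧
      ∀ (S : Fin n → Finset (List (Fin n))) (a : Fin n → List (Fin n) → ℝ),
        (∀ i, ∀ α ∈ S i, (α.map w).sum = w i) →
        (∀ i α, |a i α| ≤ C) →
        ∀ x : Fin n → ℝ,
          (⨆ i, |∑ α ∈ S i, a i α * (α.map x).prod| ^ ((w i : ℝ))⁻¹)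
            ≤ C' * ⨆ i, |x i| ^ ((w i : ℝ))⁻¹ := by
  have hne : Nonempty (Fin n) := ⟨⟨0, hn⟩⟩
  set N : ℕ := (wbar + 1) * n ^ wbar with hN
  have hNpos : 0 < N := by positivity
  have hNC : 0 < (N : ℝ) * C := by positivity
  refine ⟨max 1 ((N : ℝ) * C), lt_of_lt_of_le one_pos (le_max_left _ _), ?_⟩
  intro S a hS ha x
  set M : ℝ := ⨆ i, |x i| ^ ((w i : ℝ))⁻¹ with hM
  have hbdd : BddAbove (Set.range fun i => |x i| ^ ((w i : ℝ))⁻¹) :=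
    (Set.finite_range _).bddAbove
  have hMnn : 0 ≤ M := le_trans (Real.rpow_nonneg (abs_nonneg _) _)
    (le_ciSup hbdd ⟨0, hn⟩)
  -- each coordinate bounded
  have hx : ∀ j, |x j| ≤ M ^ (w j) := by
    intro j
    have h1 : (|x j| ^ ((w j : ℝ))⁻¹) ^ (w j) = |x j| :=
      Real.rpow_inv_natCast_pow (abs_nonneg _) (hw j).ne'
    calc |x j| = (|x j| ^ ((w j : ℝ))⁻¹) ^ (w j) := h1.symm
      _ ≤ M ^ (w j) := pow_le_pow_left₀ (Real.rpow_nonneg (abs_nonneg _) _)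
          (le_ciSup hbdd j) _
  -- product bound
  have hprod : ∀ α : List (Fin n), |(α.map x).prod| ≤ M ^ ((α.map w).sum) := by
    intro α
    induction α with
    | nil => simp
    | cons hd tl ih =>
        simp only [List.map_cons, List.prod_cons, List.sum_cons, abs_mul, pow_add]
        exact mul_le_mul (hx hd) ih (abs_nonneg _) (pow_nonneg hMnn _)
  -- cardinality bound
  have hlen : ∀ α : List (Fin n), α.length ≤ (α.map w).sum := by
    intro α
    induction α with
    | nil => simp
    | cons hd tl ih =>
        simp only [List.map_cons, List.sum_cons, List.length_cons]
        have := hw hd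
        omega
  have hcard : ∀ i, (S i).card ≤ N := by
    intro i
    have hlen' : ∀ α ∈ S i, α.length ≤ wbar := fun α hα =>
      le_trans (le_trans (hlen α) (hS i α hα).le) (hwle i)
    have : (S i).card ≤ (Finset.univ : Finset (Fin (wbar + 1) × (Fin wbar → Fin n))).card := by
      apply Finset.card_le_card_of_injOn
        (fun α => (⟨min α.length wbar, by omega⟩, fun k => α.getD k ⟨0, hn⟩))
      · intro α _; exact Finset.mem_univ _
      · intro α hα β hβ h
        simp only [Prod.mk.injEq, Fin.mk.injEq] at h
        obtain ⟨h1, h2⟩ := h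
        rw [min_eq_left (hlen' α hα), min_eq_left (hlen' β hβ)] at h1
        apply List.ext_getElem h1
        intro j hj1 hj2
        have hjw : j < wbar := lt_of_lt_of_le hj1 (hlen' α hα)
        have h3 : α.getD j ⟨0, hn⟩ = β.getD j ⟨0, hn⟩ := congrFun h2 ⟨j, hjw⟩
        rw [List.getD_eq_getElem _ _ hj1, List.getD_eq_getElem _ _ hj2] at h3
        exact h3
    simpa [hN, Fintype.card_fun] using this
  -- polynomial bound
  have hpoly : ∀ i, |∑ α ∈ S i, a i α * (α.map x).prod| ≤ (N : ℝ) * C * M ^ (w i) := by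
    intro i
    calc |∑ α ∈ S i, a i α * (α.map x).prod|
        ≤ ∑ α ∈ S i, |a i α * (α.map x).prod| := Finset.abs_sum_le_sum_abs _ _
      _ ≤ ∑ _α ∈ S i, C * M ^ (w i) := by
          apply Finset.sum_le_sum
          intro α hα
          rw [abs_mul]
          have h1 : |(α.map x).prod| ≤ M ^ (w i) := by
            have := hprod α
            rwa [hS i α hα] at this
          exact mul_le_mul (ha i α) h1 (abs_nonneg _) hC.le
      _ = (S i).card * (C * M ^ (w i)) := by rw [Finset.sum_const, nsmul_eq_mul]
      _ ≤ (N : ℝ) * (C * M ^ (w i)) := by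
          apply mul_le_mul_of_nonneg_right _ (by positivity)
          exact_mod_cast hcard i
      _ = (N : ℝ) * C * M ^ (w i) := by ring
  -- take rpow and sup
  apply ciSup_le
  intro i
  have hwi : (w i : ℝ) ≠ 0 := Nat.cast_ne_zero.mpr (hw i).ne'
  have hinv : (0:ℝ) ≤ ((w i : ℝ))⁻¹ := by positivity
  calc |∑ α ∈ S i, a i α * (α.map x).prod| ^ ((w i : ℝ))⁻¹
      ≤ ((N : ℝ) * C * M ^ (w i)) ^ ((w i : ℝ))⁻¹ :=
        Real.rpow_le_rpow (abs_nonneg _) (hpoly i) hinv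
    _ = ((N : ℝ) * C) ^ ((w i : ℝ))⁻¹ * (M ^ (w i)) ^ ((w i : ℝ))⁻¹ :=
        Real.mul_rpow hNC.le (pow_nonneg hMnn _)
    _ = ((N : ℝ) * C) ^ ((w i : ℝ))⁻¹ * M := by
        rw [Real.pow_rpow_inv_natCast hMnn (hw i).ne']
    _ ≤ max 1 ((N : ℝ) * C) * M := by
        apply mul_le_mul_of_nonneg_right _ hMnn
        rcases le_or_gt ((N : ℝ) * C) 1 with h | h
        · calc ((N : ℝ) * C) ^ ((w i : ℝ))⁻¹ ≤ (1:ℝ) ^ ((w i : ℝ))⁻¹ :=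
              Real.rpow_le_rpow hNC.le h hinv
            _ = 1 := Real.one_rpow _
            _ ≤ _ := le_max_left _ _
        · have h1 : ((w i : ℝ))⁻¹ ≤ 1 := by
            apply inv_le_one_of_one_le₀
            exact_mod_cast hw i
          have h2 : ((N : ℝ) * C) ^ ((w i : ℝ))⁻¹ ≤ ((N : ℝ) * C) ^ (1:ℝ) :=
            Real.rpow_le_rpow_of_exponent_le h.le h1
          rw [Real.rpow_one] at h2
          exact le_trans h2 (le_max_right _ _)
end
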